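/- arXiv:1405.1690 — 2 statements merged into one kernel-verified Lean document; each statement's English description precedes it below -/
import Mathlib

section
/- For any bounded linear operator A on a complex Hilbert space, the norm of the self-commutator satisfies ‖A*A − AA*‖ ≤ (inf_{λ∈ℂ} ‖A − λ·I‖)². -/
/-!
The self-commutator is unchanged by subtracting a scalar, so it suffices to show
`‖b* b - b b*‖ ≤ ‖b‖²` in a C⋆-algebra. This holds because `-‖b‖² ≤ -b b* ≤ b* b - b b* ≤ b* b ≤ ‖b‖²`
and a selfadjoint element squeezed between `-r` and `r` has norm at most `r`.
-/

lemma le_sq_ciInf {ι : Type*} [Nonempty ι] {f : ι → ℝ} {x : ℝ} (hf : ∀ i, 0 ≤ f i)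
    (h : ∀ i, x ≤ f i ^ 2) : x ≤ (⨅ i, f i) ^ 2 :=
  (Real.sqrt_le_left (le_ciInf hf)).1 <| le_ciInf fun i ↦ (Real.sqrt_le_left (hf i)).2 (h i)

def selfCommutator {R : Type*} [Ring R] [StarRing R] (a : R) : R := star a * a - a * star a

lemma selfCommutator_sub_of_forall_commute {R : Type*} [Ring R] [StarRing R]
    {z : R} (hz : ∀ b, Commute z b) (a : R) : selfCommutator (a - z) = selfCommutator a := by
  have hz' : ∀ b, Commute (star z) b := fun b ↦ by simpa using (hz (star b)).star_star
  simp only [selfCommutator, star_sub, sub_mul, mul_sub, (hz (star a)).eq, (hz' a).eq, (hz' z).eq]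
  abel

section CStarAlgebra

variable {A : Type*} [CStarAlgebra A] [PartialOrder A] [StarOrderedRing A]

lemma IsSelfAdjoint.norm_le_of_mem_Icc_algebraMap {a : A} {r : ℝ} (hr : 0 ≤ r)
    (ha : IsSelfAdjoint a) (h : a ∈ Set.Icc (algebraMap ℝ A (-r)) (algebraMap ℝ A r)) :
    ‖a‖ ≤ r := by
  obtain _ | _ := subsingleton_or_nontrivial A
  · simpa [Subsingleton.elim a 0] using hr
  rcases CStarAlgebra.norm_or_neg_norm_mem_spectrum ha with hs | hs
  · exact (le_algebraMap_iff_spectrum_le ha).1 h.2 _ hs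
  · exact neg_le_neg_iff.1 <| (algebraMap_le_iff_le_spectrum ha).1 h.1 _ hs

lemma CStarAlgebra.norm_selfCommutator_le (b : A) : ‖selfCommutator b‖ ≤ ‖b‖ ^ 2 := by
  refine ((IsSelfAdjoint.star_mul_self b).sub (.mul_star_self b)).norm_le_of_mem_Icc_algebraMap
    (by positivity) ⟨?_, ?_⟩
  · calc algebraMap ℝ A (-‖b‖ ^ 2) = -algebraMap ℝ A (‖b‖ ^ 2) := map_neg _ _
      _ ≤ -(b * star b) := neg_le_neg mul_star_le_algebraMap_norm_sq
      _ ≤ star b * b - b * star b := by simp [star_mul_self_nonneg b]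
  · calc star b * b - b * star b ≤ star b * b := sub_le_self _ (mul_star_self_nonneg b)
      _ ≤ algebraMap ℝ A (‖b‖ ^ 2) := star_mul_le_algebraMap_norm_sq

end CStarAlgebra

open ContinuousLinearMap

/-- The norm of the self-commutator of `A` is bounded by the square of the distance from `A`
to the scalar operators. -/
theorem selfCommutator_norm_le_inf_dist_scalars_sq
    {H : Type*} [NormedAddCommGroup H] [InnerProductSpace ℂ H] [CompleteSpace H]
    (A : H →L[ℂ] H) :
    ‖adjoint A ∘L A - A ∘L adjoint A‖ ≤ (⨅ lam : ℂ, ‖A - lam • (1 : H →L[ℂ] H)‖) ^ 2 := by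
  refine le_sq_ciInf (fun _ ↦ norm_nonneg _) fun lam ↦ ?_
  have hscalar : ∀ B : H →L[ℂ] H, Commute (lam • (1 : H →L[ℂ] H)) B :=
    fun B ↦ (Commute.one_left B).smul_left lam
  have := CStarAlgebra.norm_selfCommutator_le (A - lam • 1)
  rwa [selfCommutator_sub_of_forall_commute hscalar, selfCommutator, star_eq_adjoint] at this
end

section
/- Let a, b > 0 and let G = {(x, y) ∈ ℝ² : x²/a² + y²/b² ≤ 1} be the closed elliptical disk with semi-axes a and b. Then the width of G in the direction (cos t, sin t) equals 2√(a²cos²t + b²sin²t), and the minimum over t ∈ [0, 2π) of the product of the widths of G in the perpendicular directions (cos t, sin t) and (−sin t, cos t) equals 4ab, which equals (4/π)·S(G) where S(G) = πab is the area of G. -/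
open MeasureTheory Real

/-!
The support function of the ellipse in the direction `(c, s)` is `√(a²c² + b²s²)`: Cauchy–Schwarz
applied to `(x/a, y/b)` and `(ac, bs)` bounds it, and the point `(a²c, b²s)/√(a²c² + b²s²)`
attains it. The ellipse is centrally symmetric, so the width is twice the support function. For
the perpendicular unit directions `(c, s)` and `(-s, c)` the product of the two squared support
values is `(ab)² + (a² - b²)² c² s²`, which is minimal at `t = 0`. The area is that of the unit
disc scaled by the determinant `ab` of `diag(a, b)`.
-/

def ellipse (a b : ℝ) : Set (ℝ × ℝ) := {p | p.1 ^ 2 / a ^ 2 + p.2 ^ 2 / b ^ 2 ≤ 1}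

noncomputable def width (K : Set (ℝ × ℝ)) (c s : ℝ) : ℝ :=
  sSup ((fun p : ℝ × ℝ => p.1 * c + p.2 * s) '' K) -
    sInf ((fun p : ℝ × ℝ => p.1 * c + p.2 * s) '' K)

lemma IsGreatest.isLeast_neg_of_odd {α β : Type*} [InvolutiveNeg α] [AddCommGroup β]
    [PartialOrder β] [IsOrderedAddMonoid β] {K : Set α} {f : α → β} {M : β}
    (hK : ∀ p ∈ K, -p ∈ K) (hf : ∀ p, f (-p) = -f p) (h : IsGreatest (f '' K) M) :
    IsLeast (f '' K) (-M) := by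
  obtain ⟨⟨p, hp, rfl⟩, hM⟩ := h
  refine ⟨⟨-p, hK p hp, hf p⟩, ?_⟩
  rintro _ ⟨q, hq, rfl⟩
  have := hM ⟨-q, hK q hq, rfl⟩
  rw [hf] at this
  exact neg_le.mp this

lemma width_eq_two_mul_of_isGreatest {K : Set (ℝ × ℝ)} (hK : ∀ p ∈ K, -p ∈ K) {c s M : ℝ}
    (h : IsGreatest ((fun p : ℝ × ℝ => p.1 * c + p.2 * s) '' K) M) : width K c s = 2 * M := by
  have hodd : ∀ p : ℝ × ℝ, (-p).1 * c + (-p).2 * s = -(p.1 * c + p.2 * s) := fun p => by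
    simp only [Prod.fst_neg, Prod.snd_neg]; ring
  rw [width, h.csSup_eq, (h.isLeast_neg_of_odd hK hodd).csInf_eq]
  ring

lemma neg_mem_ellipse {a b : ℝ} {p : ℝ × ℝ} (hp : p ∈ ellipse a b) : -p ∈ ellipse a b := by
  simpa [ellipse] using hp

lemma sq_le_of_mem_ellipse {a b : ℝ} (ha : a ≠ 0) (hb : b ≠ 0) {p : ℝ × ℝ}
    (hp : p ∈ ellipse a b) (c s : ℝ) :
    (p.1 * c + p.2 * s) ^ 2 ≤ a ^ 2 * c ^ 2 + b ^ 2 * s ^ 2 := by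
  rw [ellipse, Set.mem_ofPred_eq, ← div_pow, ← div_pow] at hp
  set u := p.1 / a
  set v := p.2 / b
  calc (p.1 * c + p.2 * s) ^ 2 = (u * (a * c) + v * (b * s)) ^ 2 := by
        simp only [u, v]; field_simp
    _ ≤ (u * (b * s) - v * (a * c)) ^ 2 + (u * (a * c) + v * (b * s)) ^ 2 :=
        le_add_of_nonneg_left (sq_nonneg _)
    _ = (u ^ 2 + v ^ 2) * ((b * s) ^ 2 + (a * c) ^ 2) := (sq_add_sq_mul_sq_add_sq ..).symm
    _ ≤ 1 * ((b * s) ^ 2 + (a * c) ^ 2) := by gcongr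
    _ = a ^ 2 * c ^ 2 + b ^ 2 * s ^ 2 := by ring

lemma isGreatest_ellipse {a b : ℝ} (ha : a ≠ 0) (hb : b ≠ 0) (c s : ℝ) :
    IsGreatest ((fun p : ℝ × ℝ => p.1 * c + p.2 * s) '' ellipse a b)
      √(a ^ 2 * c ^ 2 + b ^ 2 * s ^ 2) := by
  set M := √(a ^ 2 * c ^ 2 + b ^ 2 * s ^ 2)
  have hM : M ^ 2 = a ^ 2 * c ^ 2 + b ^ 2 * s ^ 2 := sq_sqrt (by positivity)
  refine ⟨⟨(a ^ 2 * c / M, b ^ 2 * s / M), ?_, ?_⟩, ?_⟩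
  · show (a ^ 2 * c / M) ^ 2 / a ^ 2 + (b ^ 2 * s / M) ^ 2 / b ^ 2 ≤ 1
    calc (a ^ 2 * c / M) ^ 2 / a ^ 2 + (b ^ 2 * s / M) ^ 2 / b ^ 2
          = (a ^ 2 * c ^ 2 + b ^ 2 * s ^ 2) / M ^ 2 := by field_simp
      _ = M ^ 2 / M ^ 2 := by rw [hM]
      _ ≤ 1 := div_self_le_one _
  · show a ^ 2 * c / M * c + b ^ 2 * s / M * s = M
    calc a ^ 2 * c / M * c + b ^ 2 * s / M * s = M ^ 2 / M := by rw [hM]; ring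
      _ = M := by rw [sq, mul_self_div_self]
  · rintro _ ⟨p, hp, rfl⟩
    exact le_sqrt_of_sq_le (sq_le_of_mem_ellipse ha hb hp c s)

lemma width_ellipse {a b : ℝ} (ha : a ≠ 0) (hb : b ≠ 0) (c s : ℝ) :
    width (ellipse a b) c s = 2 * √(a ^ 2 * c ^ 2 + b ^ 2 * s ^ 2) :=
  width_eq_two_mul_of_isGreatest (fun _ => neg_mem_ellipse) (isGreatest_ellipse ha hb c s)

lemma abs_mul_le_sqrt_mul_sqrt {a b c s : ℝ} (h : c ^ 2 + s ^ 2 = 1) :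
    |a * b| ≤ √(a ^ 2 * c ^ 2 + b ^ 2 * s ^ 2) * √(a ^ 2 * s ^ 2 + b ^ 2 * c ^ 2) := by
  have hprod : (a ^ 2 * c ^ 2 + b ^ 2 * s ^ 2) * (a ^ 2 * s ^ 2 + b ^ 2 * c ^ 2)
      = (a * b) ^ 2 + (a ^ 2 - b ^ 2) ^ 2 * (c * s) ^ 2 := by
    linear_combination (a ^ 2 * b ^ 2 * (c ^ 2 + s ^ 2 + 1)) * h
  rw [← sqrt_mul (by positivity), hprod, ← sqrt_sq_eq_abs]
  exact sqrt_le_sqrt (le_add_of_nonneg_right (by positivity))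

lemma isLeast_width_mul_width_ellipse {a b : ℝ} (ha : 0 < a) (hb : 0 < b) :
    IsLeast ((fun t => width (ellipse a b) (cos t) (sin t) * width (ellipse a b) (-sin t) (cos t))
      '' Set.Ico 0 (2 * π)) (4 * a * b) := by
  simp only [width_ellipse ha.ne' hb.ne', neg_sq]
  refine ⟨⟨0, ⟨le_rfl, by positivity⟩, ?_⟩, ?_⟩
  · dsimp only
    rw [cos_zero, sin_zero]
    simp only [one_pow, mul_one, ne_eq, OfNat.ofNat_ne_zero, not_false_eq_true, zero_pow,
      mul_zero, add_zero, zero_add, sqrt_sq ha.le, sqrt_sq hb.le]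
    ring
  · rintro _ ⟨t, -, rfl⟩
    have := abs_mul_le_sqrt_mul_sqrt (a := a) (b := b) (cos_sq_add_sin_sq t)
    rw [abs_of_pos (mul_pos ha hb)] at this
    dsimp only
    linarith

lemma ellipse_eq_preimage_prodMap {a b : ℝ} (ha : a ≠ 0) (hb : b ≠ 0) :
    ellipse a b = ((a⁻¹ • LinearMap.id).prodMap (b⁻¹ • LinearMap.id) : ℝ × ℝ →ₗ[ℝ] ℝ × ℝ) ⁻¹'
      ellipse 1 1 := by
  ext p
  simp only [ellipse, Set.preimage_ofPred_eq, Set.mem_ofPred_eq, LinearMap.prodMap_apply,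
    LinearMap.smul_apply, LinearMap.id_coe, id_eq, smul_eq_mul, one_pow, div_one]
  field_simp

lemma det_prodMap_smul_id (a b : ℝ) :
    LinearMap.det ((a • LinearMap.id).prodMap (b • LinearMap.id) : ℝ × ℝ →ₗ[ℝ] ℝ × ℝ) = a * b := by
  simp [LinearMap.det_prodMap]

lemma volume_ellipse_one_one : volume (ellipse 1 1) = ENNReal.ofReal π := by
  have hdisc : Complex.measurableEquivRealProd ⁻¹' ellipse 1 1 = Metric.closedBall (0 : ℂ) 1 := by
    ext z
    simp [ellipse, Complex.norm_eq_sqrt_sq_add_sq]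
  have hmeas : MeasurableSet (ellipse 1 1) := measurableSet_le (by fun_prop) (by fun_prop)
  rw [← Complex.volume_preserving_equiv_real_prod.measure_preimage hmeas.nullMeasurableSet, hdisc,
    Complex.volume_closedBall, ← NNReal.coe_real_pi, ENNReal.ofReal_coe_nnreal, ENNReal.ofReal_one,
    one_pow, one_mul]

lemma volume_ellipse {a b : ℝ} (ha : a ≠ 0) (hb : b ≠ 0) :
    volume (ellipse a b) = ENNReal.ofReal (|a * b| * π) := by
  have hdet : LinearMap.det ((a⁻¹ • LinearMap.id).prodMap (b⁻¹ • LinearMap.id) :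
      ℝ × ℝ →ₗ[ℝ] ℝ × ℝ) ≠ 0 := by
    simp [det_prodMap_smul_id, ha, hb]
  rw [ellipse_eq_preimage_prodMap ha hb, Measure.addHaar_preimage_linearMap _ hdet,
    det_prodMap_smul_id, volume_ellipse_one_one, ← ENNReal.ofReal_mul (abs_nonneg _), ← mul_inv,
    inv_inv]

/-- For the solid ellipse `G = {(x,y) : x²/a² + y²/b² ≤ 1}` with `a, b > 0`: the width of `G`
in direction `(cos t, sin t)` is `2√(a²cos²t + b²sin²t)`; the minimum over directions of the
product of the widths in two perpendicular directions is `4ab`; and this equals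
`(4/π)·S(G)` with `S(G) = πab`. -/
theorem ellipse_width_product (a b : ℝ) (ha : 0 < a) (hb : 0 < b) :
    (∀ t : ℝ,
      sSup ((fun p : ℝ × ℝ => p.1 * cos t + p.2 * sin t) ''
          {p : ℝ × ℝ | p.1 ^ 2 / a ^ 2 + p.2 ^ 2 / b ^ 2 ≤ 1}) -
        sInf ((fun p : ℝ × ℝ => p.1 * cos t + p.2 * sin t) ''
          {p : ℝ × ℝ | p.1 ^ 2 / a ^ 2 + p.2 ^ 2 / b ^ 2 ≤ 1})
      = 2 * Real.sqrt (a ^ 2 * cos t ^ 2 + b ^ 2 * sin t ^ 2)) ∧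
    sInf ((fun t : ℝ =>
        (sSup ((fun p : ℝ × ℝ => p.1 * cos t + p.2 * sin t) ''
            {p : ℝ × ℝ | p.1 ^ 2 / a ^ 2 + p.2 ^ 2 / b ^ 2 ≤ 1}) -
          sInf ((fun p : ℝ × ℝ => p.1 * cos t + p.2 * sin t) ''
            {p : ℝ × ℝ | p.1 ^ 2 / a ^ 2 + p.2 ^ 2 / b ^ 2 ≤ 1})) *
        (sSup ((fun p : ℝ × ℝ => p.1 * (-sin t) + p.2 * cos t) ''
            {p : ℝ × ℝ | p.1 ^ 2 / a ^ 2 + p.2 ^ 2 / b ^ 2 ≤ 1}) -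
          sInf ((fun p : ℝ × ℝ => p.1 * (-sin t) + p.2 * cos t) ''
            {p : ℝ × ℝ | p.1 ^ 2 / a ^ 2 + p.2 ^ 2 / b ^ 2 ≤ 1}))) ''
      Set.Ico 0 (2 * π))
      = 4 * a * b ∧
    (volume {p : ℝ × ℝ | p.1 ^ 2 / a ^ 2 + p.2 ^ 2 / b ^ 2 ≤ 1}).toReal = π * a * b ∧
    4 * a * b
      = (4 / π) * (volume {p : ℝ × ℝ | p.1 ^ 2 / a ^ 2 + p.2 ^ 2 / b ^ 2 ≤ 1}).toReal := by
  have hE : {p : ℝ × ℝ | p.1 ^ 2 / a ^ 2 + p.2 ^ 2 / b ^ 2 ≤ 1} = ellipse a b := rfl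
  have hwidth : ∀ c s : ℝ, sSup ((fun p : ℝ × ℝ => p.1 * c + p.2 * s) '' ellipse a b) -
      sInf ((fun p : ℝ × ℝ => p.1 * c + p.2 * s) '' ellipse a b) = width (ellipse a b) c s :=
    fun _ _ => rfl
  have harea : (volume (ellipse a b)).toReal = π * a * b := by
    rw [volume_ellipse ha.ne' hb.ne', ENNReal.toReal_ofReal (by positivity),
      abs_of_pos (mul_pos ha hb)]
    ring
  simp only [hE, hwidth]
  refine ⟨fun t => width_ellipse ha.ne' hb.ne' _ _,
    (isLeast_width_mul_width_ellipse ha hb).csInf_eq, harea, ?_⟩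
  rw [harea]
  field_simp
end
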